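/- For all u, v : B_q(n) → ℝ, one has ⟨ι(u), ι(v)⟩_{π,n+1} = (1/(1 + φ·q^n))·⟨u, v⟩_{π,n} and ⟨θ_n(u), θ_n(v)⟩_{π,n+1} = (φ·q^n/(1 + φ·q^n))·⟨u, v⟩_{π,n}. -/
import Mathlib


open Module

noncomputable def piw (q : ℕ) (φ : ℝ) (m d : ℕ) : ℝ :=
  φ ^ d * (q : ℝ) ^ (d * (d - 1) / 2) / ∏ k ∈ Finset.range m, (1 + φ * (q : ℝ) ^ k)

noncomputable instance (F V : Type) [Field F] [AddCommGroup V] [Module F V] [Finite V] :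
    Fintype (Submodule F V) := Fintype.ofFinite _

noncomputable def H0 (F : Type) [Field F] (n : ℕ) : Submodule F (Fin (n + 1) → F) :=
  LinearMap.ker (LinearMap.proj (R := F) (φ := fun _ : Fin (n + 1) => F) (Fin.last n))

noncomputable instance (F : Type) [Field F] [Fintype F] (n : ℕ) :
    Fintype {X : Submodule F (Fin (n + 1) → F) // X ≤ H0 F n} := Fintype.ofFinite _

-- `ι(v)`: extend a vector on `B_q(n)` (identified with the subspaces of `F^{n+1}`
-- contained in the hyperplane `H₀`) by zero on `B∂(n+1)`.
open Classical in
noncomputable def iota (F : Type) [Field F] [Fintype F] (n : ℕ)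
    (v : {X : Submodule F (Fin (n + 1) → F) // X ≤ H0 F n} → ℝ) :
    Submodule F (Fin (n + 1) → F) → ℝ :=
  fun X => if h : X ≤ H0 F n then v ⟨X, h⟩ else 0

-- `θ_n(v)`: the vector on `B_q(n+1)` vanishing on subspaces contained in `H₀` and with
-- value `v(Y ∩ H₀)` at each `Y ∈ B∂(n+1)`.
open Classical in
noncomputable def theta (F : Type) [Field F] [Fintype F] (n : ℕ)
    (v : {X : Submodule F (Fin (n + 1) → F) // X ≤ H0 F n} → ℝ) :
    Submodule F (Fin (n + 1) → F) → ℝ :=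
  fun Y => if Y ≤ H0 F n then 0 else v ⟨Y ⊓ H0 F n, inf_le_right⟩

/-! ### Auxiliary material -/

attribute [local instance] Classical.propDecidable
set_option linter.unusedSectionVars false
set_option linter.unnecessarySimpa false
set_option maxHeartbeats 1000000

section Aux

variable {F : Type} [Field F] [Fintype F] {n : ℕ}

lemma mem_H0_iff (x : Fin (n+1) → F) : x ∈ H0 F n ↔ x (Fin.last n) = 0 := by
  simp [H0]

lemma finrank_H0 : finrank F (H0 F n) = n := by
  have hs : Function.Surjective
      (LinearMap.proj (R := F) (φ := fun _ : Fin (n + 1) => F) (Fin.last n)) := by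
    intro c; exact ⟨fun _ => c, rfl⟩
  have h := LinearMap.finrank_range_add_finrank_ker
    (LinearMap.proj (R := F) (φ := fun _ : Fin (n + 1) => F) (Fin.last n))
  rw [LinearMap.range_eq_top.mpr hs, finrank_top, finrank_self] at h
  have hpi : finrank F (Fin (n+1) → F) = n + 1 := by simp [Module.finrank_pi]
  rw [hpi] at h
  unfold H0
  omega

lemma finrank_of_not_le {Y : Submodule F (Fin (n+1) → F)} (hY : ¬ Y ≤ H0 F n) :
    finrank F Y = finrank F (Y ⊓ H0 F n : Submodule F (Fin (n+1) → F)) + 1 := by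
  set ℓ : Y →ₗ[F] F :=
    (LinearMap.proj (R := F) (φ := fun _ : Fin (n + 1) => F) (Fin.last n)).comp Y.subtype with hℓ
  have hker : LinearMap.ker ℓ = (Y ⊓ H0 F n).comap Y.subtype := by
    ext x
    simp [hℓ, H0, x.2]
  have hsurj : LinearMap.range ℓ = ⊤ := by
    rcases (SetLike.not_le_iff_exists).mp hY with ⟨y, hyY, hyH⟩
    have hy : y (Fin.last n) ≠ 0 := by simpa [H0] using hyH
    rw [eq_top_iff]
    intro c _
    refine ⟨(c * (y (Fin.last n))⁻¹) • ⟨y, hyY⟩, ?_⟩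
    show ((c * (y (Fin.last n))⁻¹) • y) (Fin.last n) = c
    rw [Pi.smul_apply, smul_eq_mul, mul_assoc, inv_mul_cancel₀ hy, mul_one]
  have h1 := LinearMap.finrank_range_add_finrank_ker ℓ
  rw [hsurj, finrank_top, finrank_self, hker] at h1
  have h2 : finrank F ((Y ⊓ H0 F n).comap Y.subtype) =
      finrank F (Y ⊓ H0 F n : Submodule F (Fin (n+1) → F)) :=
    (Submodule.comapSubtypeEquivOfLe inf_le_left).finrank_eq
  omega

section fiber

noncomputable def ee : Fin (n+1) → F := Pi.single (Fin.last n) 1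

variable (X : Submodule F (Fin (n+1) → F)) (hX : X ≤ H0 F n)

lemma span_inf (w : H0 F n) (hX : X ≤ H0 F n) :
    (X ⊔ (Submodule.span F {ee + (w : Fin (n+1) → F)})) ⊓ H0 F n = X := by
  apply le_antisymm
  · rintro y ⟨hy1, hy2⟩
    rcases Submodule.mem_sup.mp hy1 with ⟨x, hx, z, hz, rfl⟩
    rcases Submodule.mem_span_singleton.mp hz with ⟨c, rfl⟩
    have hx0 : x (Fin.last n) = 0 := (mem_H0_iff x).mp (hX hx)
    have hw0 : (w : Fin (n+1) → F) (Fin.last n) = 0 := (mem_H0_iff _).mp w.2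
    have hy0 := (mem_H0_iff _).mp hy2
    have hc : c = 0 := by simpa [ee, hx0, hw0] using hy0
    simpa [hc] using hx
  · exact le_inf le_sup_left hX

lemma span_eq {Y : Submodule F (Fin (n+1) → F)} (hYX : Y ⊓ H0 F n = X)
    (w : H0 F n) (hw : ee + (w : Fin (n+1) → F) ∈ Y) :
    X ⊔ (Submodule.span F {ee + (w : Fin (n+1) → F)}) = Y := by
  apply le_antisymm
  · refine sup_le ?_ ?_
    · rw [← hYX]; exact inf_le_left
    · rwa [Submodule.span_singleton_le_iff_mem]
  · intro z hz
    set c := z (Fin.last n) with hc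
    have hw0 : (w : Fin (n+1) → F) (Fin.last n) = 0 := (mem_H0_iff _).mp w.2
    have h1 : z - c • (ee + (w : Fin (n+1) → F)) ∈ Y := Y.sub_mem hz (Y.smul_mem c hw)
    have h2 : z - c • (ee + (w : Fin (n+1) → F)) ∈ H0 F n := by
      rw [mem_H0_iff]
      simp [ee, hw0, ← hc]
    have h3 : z - c • (ee + (w : Fin (n+1) → F)) ∈ X := hYX ▸ ⟨h1, h2⟩
    have hzz : z = (z - c • (ee + (w : Fin (n+1) → F))) + c • (ee + (w : Fin (n+1) → F)) := by
      ring
    rw [hzz]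
    exact Submodule.mem_sup.mpr ⟨_, h3, _, Submodule.mem_span_singleton.mpr ⟨c, rfl⟩, rfl⟩

lemma span_not_le (w : H0 F n) :
    ¬ (X ⊔ (Submodule.span F {ee + (w : Fin (n+1) → F)})) ≤ H0 F n := by
  intro hle
  have hmem : ee + (w : Fin (n+1) → F) ∈ H0 F n :=
    hle (Submodule.mem_sup_right (Submodule.mem_span_singleton_self _))
  have hw0 : (w : Fin (n+1) → F) (Fin.last n) = 0 := (mem_H0_iff _).mp w.2
  have h := (mem_H0_iff _).mp hmem
  simp [ee, hw0] at h

noncomputable def Phi (w : H0 F n) :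
    {Y : Submodule F (Fin (n+1) → F) // ¬ Y ≤ H0 F n ∧ Y ⊓ H0 F n = X} :=
  ⟨X ⊔ (Submodule.span F {ee + (w : Fin (n+1) → F)}), span_not_le X w, span_inf X w hX⟩

lemma Phi_coe (w : H0 F n) :
    (Phi X hX w).1 = X ⊔ (Submodule.span F {ee + (w : Fin (n+1) → F)}) := rfl

include hX in
lemma Phi_surjective : Function.Surjective (Phi X hX) := by
  rintro ⟨Y, hY, hYX⟩
  rcases SetLike.not_le_iff_exists.mp hY with ⟨y, hyY, hyH⟩
  have hy : y (Fin.last n) ≠ 0 := fun h => hyH ((mem_H0_iff y).mpr h)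
  set w0 : Fin (n+1) → F := (y (Fin.last n))⁻¹ • y - ee with hw0
  have hw0H : w0 ∈ H0 F n := by
    rw [mem_H0_iff, hw0]
    simp [ee, inv_mul_cancel₀ hy]
  refine ⟨⟨w0, hw0H⟩, ?_⟩
  have hmem : ee + w0 ∈ Y := by
    rw [hw0]
    have h : ee + ((y (Fin.last n))⁻¹ • y - ee) = (y (Fin.last n))⁻¹ • y := by ring
    rw [h]
    exact Y.smul_mem _ hyY
  apply Subtype.ext
  rw [Phi_coe]
  exact span_eq X hYX ⟨w0, hw0H⟩ hmem

attribute [local irreducible] Phi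

include hX in
lemma card_fiber_mul :
    Fintype.card {Y : Submodule F (Fin (n+1) → F) // ¬ Y ≤ H0 F n ∧ Y ⊓ H0 F n = X} *
      Fintype.card X = Fintype.card (H0 F n) := by
  have h1 : Fintype.card (H0 F n) =
      ∑ Y : {Y : Submodule F (Fin (n+1) → F) // ¬ Y ≤ H0 F n ∧ Y ⊓ H0 F n = X},
        Fintype.card {w : H0 F n // Phi X hX w = Y} := by
    rw [← Fintype.card_sigma]
    exact Fintype.card_congr (Equiv.sigmaFiberEquiv (Phi X hX)).symm
  have h2 : ∀ Y : {Y : Submodule F (Fin (n+1) → F) // ¬ Y ≤ H0 F n ∧ Y ⊓ H0 F n = X},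
      Fintype.card {w : H0 F n // Phi X hX w = Y} = Fintype.card X := by
    intro Y
    rcases Phi_surjective X hX Y with ⟨w0, hw0⟩
    have hPhi : ∀ w : H0 F n, ee + (w : Fin (n+1) → F) ∈ Y.1 → Phi X hX w = Y := by
      intro w hw
      apply Subtype.ext
      rw [Phi_coe]
      exact span_eq X Y.2.2 w hw
    have hmemw : ∀ w : H0 F n, Phi X hX w = Y → ee + (w : Fin (n+1) → F) ∈ Y.1 := by
      intro w hw
      rw [← hw, Phi_coe]
      exact Submodule.mem_sup_right (Submodule.mem_span_singleton_self _)
    have hmem0 : ee + (w0 : Fin (n+1) → F) ∈ Y.1 := hmemw w0 hw0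
    have hXY : X ≤ Y.1 := by
      have h := inf_le_left (a := Y.1) (b := H0 F n)
      rwa [Y.2.2] at h
    have key : ∀ x : X, Phi X hX (w0 + ⟨x.1, hX x.2⟩) = Y := by
      intro x
      apply hPhi
      have h : ee + ((w0 : Fin (n+1) → F) + x.1) = (ee + (w0 : Fin (n+1) → F)) + x.1 := by ring
      show ee + ((w0 : Fin (n+1) → F) + x.1) ∈ Y.1
      rw [h]
      exact Y.1.add_mem hmem0 (hXY x.2)
    have hbij : Function.Bijective
        (fun x : X => (⟨w0 + ⟨x.1, hX x.2⟩, key x⟩ : {w : H0 F n // Phi X hX w = Y})) := by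
      constructor
      · intro a b hab
        have h1' : w0 + (⟨a.1, hX a.2⟩ : H0 F n) = w0 + ⟨b.1, hX b.2⟩ :=
          congrArg Subtype.val hab
        have h2' := add_left_cancel h1'
        have h3' : (a : Fin (n+1) → F) = b := Subtype.mk_eq_mk.mp h2'
        exact Subtype.ext h3'
      · rintro ⟨w, hw⟩
        have hd : (w : Fin (n+1) → F) - (w0 : Fin (n+1) → F) ∈ X := by
          have h := Y.1.sub_mem (hmemw w hw) hmem0
          have h' : (ee + (w : Fin (n+1) → F)) - (ee + (w0 : Fin (n+1) → F))
              = (w : Fin (n+1) → F) - (w0 : Fin (n+1) → F) := by ring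
          rw [h'] at h
          have hmm : (w : Fin (n+1) → F) - (w0 : Fin (n+1) → F) ∈ Y.1 ⊓ H0 F n :=
            ⟨h, (H0 F n).sub_mem w.2 w0.2⟩
          rwa [Y.2.2] at hmm
        refine ⟨⟨(w : Fin (n+1) → F) - (w0 : Fin (n+1) → F), hd⟩, ?_⟩
        apply Subtype.ext
        apply Subtype.ext
        show (w0 : Fin (n+1) → F) + ((w : Fin (n+1) → F) - (w0 : Fin (n+1) → F)) = w
        ring
    exact (Fintype.card_congr (Equiv.ofBijective _ hbij)).symm
  rw [h1, Finset.sum_congr rfl (fun Y _ => h2 Y), Finset.sum_const, Finset.card_univ,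
    smul_eq_mul]

end fiber

end Aux

lemma piw_succ (q : ℕ) (φ : ℝ) (n d : ℕ) :
    piw q φ (n+1) d = piw q φ n d / (1 + φ * (q:ℝ)^n) := by
  unfold piw
  rw [Finset.prod_range_succ, div_div]

lemma piw_mul (q : ℕ) (φ : ℝ) (m k : ℕ) :
    piw q φ m (k+1) = φ * (q:ℝ)^k * piw q φ m k := by
  unfold piw
  have h : (k+1) * ((k+1)-1) / 2 = k*(k-1)/2 + k := by
    rcases k with _ | m
    · simp
    · have h2 : (m+1+1) * (m+1+1-1) = (m+1)*(m+1-1) + 2*(m+1) := by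
        simp
        ring
      omega
  rw [h, pow_add, pow_succ]
  ring

theorem stmt_19 (q n : ℕ) (F : Type) [Field F] [Fintype F] (hq : Fintype.card F = q)
    (φ : ℝ) (hφ : 0 < φ)
    (u v : {X : Submodule F (Fin (n + 1) → F) // X ≤ H0 F n} → ℝ) :
    (∑ X : Submodule F (Fin (n + 1) → F),
        iota F n u X * iota F n v X * piw q φ (n + 1) (finrank F X) =
      (1 / (1 + φ * (q : ℝ) ^ n)) *
        ∑ X : {X : Submodule F (Fin (n + 1) → F) // X ≤ H0 F n},
          u X * v X * piw q φ n (finrank F X.1)) ∧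
    (∑ X : Submodule F (Fin (n + 1) → F),
        theta F n u X * theta F n v X * piw q φ (n + 1) (finrank F X) =
      (φ * (q : ℝ) ^ n / (1 + φ * (q : ℝ) ^ n)) *
        ∑ X : {X : Submodule F (Fin (n + 1) → F) // X ≤ H0 F n},
          u X * v X * piw q φ n (finrank F X.1)) := by
  have hq1 : 0 < q := by rw [← hq]; exact Fintype.card_pos
  have hq0 : (0:ℝ) < (q:ℝ) := by exact_mod_cast hq1
  constructor
  · -- first identity
    set f' : Submodule F (Fin (n+1) → F) → ℝ := fun X =>
      if h : X ≤ H0 F n then u ⟨X, h⟩ * v ⟨X, h⟩ * piw q φ n (finrank F X) else 0 with hf'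
    have h1 : ∀ X : Submodule F (Fin (n+1) → F),
        iota F n u X * iota F n v X * piw q φ (n + 1) (finrank F X)
          = (1/(1 + φ * (q:ℝ)^n)) * f' X := by
      intro X
      by_cases h : X ≤ H0 F n
      · simp only [hf', iota, dif_pos h]
        rw [piw_succ]
        ring
      · simp [hf', iota, dif_neg h]
    rw [Finset.sum_congr rfl fun X _ => h1 X, ← Finset.mul_sum]
    congr 1
    have h2 : ∑ X : Submodule F (Fin (n+1) → F), f' X
        = ∑ X ∈ Finset.univ.filter (fun X : Submodule F (Fin (n+1) → F) => X ≤ H0 F n), f' X := by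
      refine (Finset.sum_filter_of_ne ?_).symm
      intro X _ hX
      by_contra hc
      exact hX (by simp [hf', dif_neg hc])
    rw [h2, Finset.sum_subtype (p := fun X : Submodule F (Fin (n+1) → F) => X ≤ H0 F n) _ (fun X => by simp) f']
    refine Finset.sum_congr rfl ?_
    rintro X -
    simp [hf', dif_pos X.2]
  · -- second identity
    set g : Submodule F (Fin (n+1) → F) → {X : Submodule F (Fin (n + 1) → F) // X ≤ H0 F n} :=
      fun Y => ⟨Y ⊓ H0 F n, inf_le_right⟩ with hg
    set s := Finset.univ.filter
      (fun Y : Submodule F (Fin (n+1) → F) => ¬ Y ≤ H0 F n) with hs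
    have h0 : ∑ Y : Submodule F (Fin (n+1) → F),
        theta F n u Y * theta F n v Y * piw q φ (n + 1) (finrank F Y)
        = ∑ Y ∈ s, theta F n u Y * theta F n v Y * piw q φ (n + 1) (finrank F Y) := by
      refine (Finset.sum_filter_of_ne ?_).symm
      intro Y _ hY
      by_contra hc
      exact hY (by simp [theta, if_pos hc])
    rw [h0, ← Finset.sum_fiberwise s g
      (fun Y => theta F n u Y * theta F n v Y * piw q φ (n + 1) (finrank F Y)),
      Finset.mul_sum]
    refine Finset.sum_congr rfl ?_
    rintro b -
    have hconst : ∀ Y ∈ s.filter (fun Y => g Y = b),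
        theta F n u Y * theta F n v Y * piw q φ (n + 1) (finrank F Y)
          = u b * v b * piw q φ (n + 1) (finrank F b.1 + 1) := by
      intro Y hY
      rw [Finset.mem_filter, hs, Finset.mem_filter] at hY
      obtain ⟨⟨-, hYn⟩, hYb⟩ := hY
      have hYb' : Y ⊓ H0 F n = b.1 := congrArg Subtype.val hYb
      have hrk : finrank F Y = finrank F b.1 + 1 := by
        rw [finrank_of_not_le hYn, hYb']
      rw [hrk]
      simp only [theta, if_neg hYn]
      rw [show (⟨Y ⊓ H0 F n, inf_le_right⟩ :
        {X : Submodule F (Fin (n + 1) → F) // X ≤ H0 F n}) = b from hYb]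
    rw [Finset.sum_congr rfl hconst, Finset.sum_const, nsmul_eq_mul]
    have hcard : (s.filter (fun Y => g Y = b)).card
        = Fintype.card {Y : Submodule F (Fin (n+1) → F) // ¬ Y ≤ H0 F n ∧ Y ⊓ H0 F n = b.1} := by
      rw [Fintype.card_subtype]
      congr 1
      rw [hs, Finset.filter_filter]
      apply Finset.filter_congr
      intro Y _
      simp [hg, Subtype.ext_iff]
    have hfib := card_fiber_mul b.1 b.2
    rw [card_eq_pow_finrank (K := F) (V := b.1), card_eq_pow_finrank (K := F) (V := H0 F n),
      finrank_H0, hq] at hfib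
    have hN : ((s.filter (fun Y => g Y = b)).card : ℝ) * (q:ℝ)^(finrank F b.1) = (q:ℝ)^n := by
      rw [hcard]
      exact_mod_cast congrArg (fun m : ℕ => (m : ℝ)) hfib
    have hqk : (q:ℝ)^(finrank F b.1) ≠ 0 := pow_ne_zero _ (ne_of_gt hq0)
    have hNval : ((s.filter (fun Y => g Y = b)).card : ℝ)
        = (q:ℝ)^n / (q:ℝ)^(finrank F b.1) := by
      rw [eq_div_iff hqk]
      exact hN
    rw [hNval, piw_succ, piw_mul]
    have hden : (1 + φ * (q:ℝ)^n) ≠ 0 := by positivity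
    field_simp
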